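/- arXiv:2005.06854 — 4 statements merged into one kernel-verified Lean document; each statement's English description precedes it below -/
import Mathlib

section
/- (Monotonicity of α-largeness.) For every ordinal α < ω^ω and all finite sets X, Y ⊆ ℕ with 1 ≤ min X, if X is α-large and X ⊆ Y, then Y is α-large. -/
/-- An ordinal `α < ω^ω` is represented by the list of exponents of its Cantor
normal form, *least significant first*: the list `[n₀, n₁, …, n_k]` with
`n₀ ≤ n₁ ≤ ⋯ ≤ n_k` represents the ordinal `ω^{n_k} + ⋯ + ω^{n₁} + ω^{n₀}`.
`largeStep α m` is the ordinal `α[m]`:  `0[m] = 0`; `α[m] = β` if `α = β + 1`;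
and `α[m] = β + ω^{n-1}·m` if `α = β + ω^n` with `n ≥ 1` (canonical decomposition). -/
def largeStep : List ℕ → ℕ → List ℕ
  | [], _ => []
  | 0 :: β, _ => β
  | (n + 1) :: β, m => List.replicate m n ++ β

/-- `IsAlphaLarge α X` says that the finite set `X = {x₀ < x₁ < ⋯ < x_{ℓ-1}} ⊆ ℕ`
is `α`-large, i.e. `α[x₀][x₁]⋯[x_{ℓ-1}] = 0`. -/
def IsAlphaLarge (α : List ℕ) (X : Finset ℕ) : Prop :=
  (X.sort (· ≤ ·)).foldl largeStep α = []

/-! Inserting an element `y` into a sorted list replaces the ordinal `δ` reached at that point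
by `δ[y]`. For `y ≤ x`, `δ[y]` is `δ[x]` with some least significant terms dropped, and dropping
one such term is the step `δ ↦ δ[0]`. So, by induction on the remaining list `L`, it suffices that
`L` exhausts `δ[y]` whenever it exhausts `δ` and `y` is at most every element of `L`. -/

theorem largeStep_zero (δ : List ℕ) : largeStep δ 0 = δ.tail := by
  rcases δ with _ | ⟨_ | _, _⟩ <;> rfl

theorem exists_largeStep_eq_drop {x y : ℕ} (hyx : y ≤ x) (δ : List ℕ) :
    ∃ k, largeStep δ y = (largeStep δ x).drop k := by
  rcases δ with _ | ⟨_ | n, β⟩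
  · exact ⟨0, rfl⟩
  · exact ⟨0, rfl⟩
  · refine ⟨x - y, ?_⟩
    simp only [largeStep]
    rw [List.drop_append_of_le_length (by simp), List.drop_replicate, Nat.sub_sub_self hyx]

theorem foldl_largeStep_largeStep_eq_nil {L δ : List ℕ} {y : ℕ}
    (hL : (y :: L).Pairwise (· ≤ ·)) (h : L.foldl largeStep δ = []) :
    L.foldl largeStep (largeStep δ y) = [] := by
  induction L generalizing δ y with
  | nil => subst h; rfl
  | cons x L ih =>
    have hyx : y ≤ x := List.rel_of_pairwise_cons hL List.mem_cons_self
    have hxL : (x :: L).Pairwise (· ≤ ·) := hL.of_cons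
    have hL₀ : L.Pairwise (· ≤ ·) := hxL.of_cons
    have drop_eq_nil : ∀ k ε, L.foldl largeStep ε = [] → L.foldl largeStep (ε.drop k) = [] := by
      intro k ε hε
      induction k with
      | zero => exact hε
      | succ k ihk =>
        rw [← List.tail_drop, ← largeStep_zero]
        exact ih (List.pairwise_cons.2 ⟨fun _ _ => Nat.zero_le _, hL₀⟩) ihk
    obtain ⟨k, hk⟩ := exists_largeStep_eq_drop hyx δ
    change L.foldl largeStep (largeStep (largeStep δ y) x) = []
    rw [hk]
    exact ih hxL (drop_eq_nil k _ h)

theorem foldl_largeStep_eq_nil_of_sublist {L L' : List ℕ} (hs : L.Sublist L')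
    (hL' : L'.Pairwise (· ≤ ·)) {α : List ℕ} (h : L.foldl largeStep α = []) :
    L'.foldl largeStep α = [] := by
  induction hs generalizing α with
  | slnil => exact h
  | cons _ _ ih => exact foldl_largeStep_largeStep_eq_nil hL' (ih hL'.of_cons h)
  | cons_cons _ _ ih => exact ih hL'.of_cons h

theorem Finset.sort_sublist_sort_of_subset {X Y : Finset ℕ} (hXY : X ⊆ Y) :
    (X.sort (· ≤ ·)).Sublist (Y.sort (· ≤ ·)) := by
  refine List.sublist_of_subperm_of_pairwise ?_ (X.pairwise_sort _) (Y.pairwise_sort _)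
  rw [← Multiset.coe_le, Finset.sort_eq, Finset.sort_eq]
  exact Finset.val_le_iff.mpr hXY

theorem alphaLarge_mono_general (α : List ℕ) (X Y : Finset ℕ)
    (hlarge : IsAlphaLarge α X) (hXY : X ⊆ Y) :
    IsAlphaLarge α Y :=
  foldl_largeStep_eq_nil_of_sublist (Finset.sort_sublist_sort_of_subset hXY)
    (Y.pairwise_sort _) hlarge

/-- **Monotonicity of α-largeness.** For every ordinal `α < ω^ω` and all finite
sets `X, Y ⊆ ℕ` with `1 ≤ min X`, if `X` is `α`-large and `X ⊆ Y`, then `Y` is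
`α`-large. -/
theorem alphaLarge_mono (α : List ℕ) (hα : List.Pairwise (· ≤ ·) α)
    (X Y : Finset ℕ) (hmin : ∀ x ∈ X, 1 ≤ x)
    (hlarge : IsAlphaLarge α X) (hXY : X ⊆ Y) :
    IsAlphaLarge α Y :=
  alphaLarge_mono_general α X Y hlarge hXY
end

section
/- (Decomposition of α-largeness for sums of ω-powers.) Let α = ω^{n_k} + ⋯ + ω^{n_0} where n_k ≥ ⋯ ≥ n_0 are natural numbers. A finite set X ⊆ ℕ with min X ≥ 1 is α-large if and only if there exist sets X_0, …, X_k such that X is the disjoint union X_0 ⊔ ⋯ ⊔ X_k, each X_i is ω^{n_i}-large, and max X_i < min X_{i+1} for every i < k. -/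
def IsLargeList (γ xs : List ℕ) : Prop :=
  xs.foldl largeStep γ = []

theorem isAlphaLarge_iff_isLargeList_sort {α : List ℕ} {X : Finset ℕ} :
    IsAlphaLarge α X ↔ IsLargeList α (X.sort (· ≤ ·)) :=
  Iff.rfl

theorem largeStep_append {γ : List ℕ} (hγ : γ ≠ []) (δ : List ℕ) (m : ℕ) :
    largeStep (γ ++ δ) m = largeStep γ m ++ δ := by
  match γ with
  | 0 :: _ => rfl
  | (_ + 1) :: _ => simp [largeStep]

theorem exists_largeStep_eq_append_largeStep (γ : List ℕ) {y b : ℕ} (hyb : y ≤ b) :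
    ∃ p, largeStep γ b = p ++ largeStep γ y := by
  match γ with
  | [] => exact ⟨[], rfl⟩
  | 0 :: _ => exact ⟨[], rfl⟩
  | (e + 1) :: δ =>
    refine ⟨List.replicate (b - y) e, ?_⟩
    simp only [largeStep, ← List.append_assoc, ← List.replicate_add, Nat.sub_add_cancel hyb]

namespace IsLargeList

variable {γ xs : List ℕ}

@[simp]
theorem nil_left (xs : List ℕ) : IsLargeList [] xs := by
  induction xs with
  | nil => rfl
  | cons x xs ih => exact ih

@[simp]
theorem nil_right : IsLargeList γ [] ↔ γ = [] :=
  Iff.rfl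

@[simp]
theorem cons_right {x : ℕ} : IsLargeList γ (x :: xs) ↔ IsLargeList (largeStep γ x) xs :=
  Iff.rfl

theorem cons_and_of_append (xs : List ℕ) (hxs : xs.Pairwise (· ≤ ·)) :
    (∀ γ y, (∀ x ∈ xs, y ≤ x) → IsLargeList γ xs → IsLargeList γ (y :: xs)) ∧
      ∀ p δ, IsLargeList (p ++ δ) xs → IsLargeList δ xs := by
  induction xs with
  | nil =>
    refine ⟨fun γ y _ h => ?_, fun p δ h => (List.append_eq_nil_iff.mp h).2⟩
    rw [nil_right.mp h]
    exact nil_left _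
  | cons b xs ih =>
    obtain ⟨hb, hxs⟩ := List.pairwise_cons.mp hxs
    obtain ⟨ih_cons, ih_of_append⟩ := ih hxs
    refine ⟨fun γ y hy h => ?_, fun p δ h => ?_⟩
    · obtain ⟨p, hp⟩ := exists_largeStep_eq_append_largeStep γ (hy b List.mem_cons_self)
      rw [cons_right, hp] at h
      exact ih_cons _ b hb (ih_of_append p _ h)
    · rcases eq_or_ne p [] with rfl | hp
      · exact h
      · rw [cons_right, largeStep_append hp] at h
        exact ih_cons δ b hb (ih_of_append _ δ h)

theorem cons {y : ℕ} (hxs : (y :: xs).Pairwise (· ≤ ·)) (h : IsLargeList γ xs) :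
    IsLargeList γ (y :: xs) :=
  (cons_and_of_append xs hxs.of_cons).1 γ y (List.pairwise_cons.mp hxs).1 h

theorem append_left (as : List ℕ) (hxs : (as ++ xs).Pairwise (· ≤ ·)) (h : IsLargeList γ xs) :
    IsLargeList γ (as ++ xs) := by
  induction as with
  | nil => exact h
  | cons a as ih => exact cons hxs (ih hxs.of_cons)

end IsLargeList

theorem isLargeList_append_iff {γ δ xs : List ℕ} (hγ : γ ≠ []) (hxs : xs.Pairwise (· ≤ ·)) :
    IsLargeList (γ ++ δ) xs ↔
      ∃ as bs, xs = as ++ bs ∧ IsLargeList γ as ∧ IsLargeList δ bs := by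
  induction xs generalizing γ with
  | nil => simp [hγ]
  | cons x xs ih =>
    have split_cons : (∃ as bs, x :: xs = as ++ bs ∧ IsLargeList γ as ∧ IsLargeList δ bs) ↔
        ∃ as bs, xs = as ++ bs ∧ IsLargeList (largeStep γ x) as ∧ IsLargeList δ bs := by
      constructor
      · rintro ⟨_ | ⟨a, as⟩, bs, hxs_eq, has, hbs⟩
        · exact absurd has (by simpa using hγ)
        · obtain ⟨rfl, rfl⟩ := List.cons_eq_cons.mp hxs_eq
          exact ⟨as, bs, rfl, has, hbs⟩
      · rintro ⟨as, bs, rfl, has, hbs⟩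
        exact ⟨x :: as, bs, rfl, has, hbs⟩
    rw [split_cons, IsLargeList.cons_right, largeStep_append hγ]
    rcases eq_or_ne (largeStep γ x) [] with hx | hx
    · rw [hx, List.nil_append]
      refine ⟨fun h => ⟨[], xs, rfl, IsLargeList.nil_left _, h⟩, ?_⟩
      rintro ⟨as, bs, rfl, -, hbs⟩
      exact IsLargeList.append_left as hxs.of_cons hbs
    · exact ih hx hxs.of_cons

theorem Finset.sort_eq_of_sortedLT {α : Type*} [LinearOrder α] {s : Finset α} {l : List α}
    (hl : l.SortedLT) (hmem : ∀ a, a ∈ l ↔ a ∈ s) : s.sort (· ≤ ·) = l :=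
  s.sortedLT_sort.eq_of_mem_iff hl fun a => by rw [Finset.mem_sort, hmem]

theorem Finset.sort_union_of_lt {α : Type*} [LinearOrder α] {A B : Finset α}
    (hAB : ∀ a ∈ A, ∀ b ∈ B, a < b) :
    (A ∪ B).sort (· ≤ ·) = A.sort (· ≤ ·) ++ B.sort (· ≤ ·) := by
  refine Finset.sort_eq_of_sortedLT ?_ fun a => by simp
  rw [List.sortedLT_iff_pairwise, List.pairwise_append]
  exact ⟨A.sortedLT_sort.pairwise, B.sortedLT_sort.pairwise,
    fun a ha b hb => hAB a (by simpa using ha) b (by simpa using hb)⟩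

theorem isAlphaLarge_append_iff {γ δ : List ℕ} (hγ : γ ≠ []) {X : Finset ℕ} :
    IsAlphaLarge (γ ++ δ) X ↔
      ∃ A B, X = A ∪ B ∧ (∀ a ∈ A, ∀ b ∈ B, a < b) ∧ IsAlphaLarge γ A ∧ IsAlphaLarge δ B := by
  have hX := X.sortedLT_sort
  rw [isAlphaLarge_iff_isLargeList_sort, isLargeList_append_iff hγ (X.pairwise_sort _)]
  constructor
  · rintro ⟨as, bs, hsplit, has, hbs⟩
    rw [hsplit, List.sortedLT_iff_pairwise, List.pairwise_append] at hX
    obtain ⟨has_sorted, hbs_sorted, has_lt_bs⟩ := hX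
    refine ⟨as.toFinset, bs.toFinset, ?_, by simpa using has_lt_bs, ?_, ?_⟩
    · ext x
      rw [← Finset.mem_sort (· ≤ ·), hsplit]
      simp
    · rwa [isAlphaLarge_iff_isLargeList_sort,
        Finset.sort_eq_of_sortedLT has_sorted.sortedLT fun a => List.mem_toFinset.symm]
    · rwa [isAlphaLarge_iff_isLargeList_sort,
        Finset.sort_eq_of_sortedLT hbs_sorted.sortedLT fun a => List.mem_toFinset.symm]
  · rintro ⟨A, B, rfl, hAB, hA, hB⟩
    exact ⟨_, _, Finset.sort_union_of_lt hAB, hA, hB⟩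

theorem IsAlphaLarge.nonempty {e : ℕ} {γ : List ℕ} {X : Finset ℕ} (h : IsAlphaLarge (e :: γ) X) :
    X.Nonempty := by
  rw [Finset.nonempty_iff_ne_empty]
  rintro rfl
  simp [IsAlphaLarge] at h

def HasBlockDecomposition (P : ℕ → Finset ℕ → Prop) (k : ℕ) (X : Finset ℕ) : Prop :=
  ∃ Y : ℕ → Finset ℕ,
    X = (Finset.range (k + 1)).biUnion Y ∧
    (∀ i < k + 1, ∀ j < k + 1, i ≠ j → Disjoint (Y i) (Y j)) ∧
    (∀ i < k + 1, P i (Y i)) ∧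
    (∀ i < k, ∀ a ∈ Y i, ∀ b ∈ Y (i + 1), a < b)

theorem Finset.biUnion_range_succ' {β : Type*} [DecidableEq β] (Y : ℕ → Finset β) (k : ℕ) :
    (Finset.range (k + 1)).biUnion Y = Y 0 ∪ (Finset.range k).biUnion fun i => Y (i + 1) := by
  ext x
  simp only [Finset.mem_biUnion, Finset.mem_range, Finset.mem_union]
  exact Nat.exists_lt_succ_left

theorem lt_of_mem_of_mem_of_chain {Y : ℕ → Finset ℕ} {k : ℕ} (hne : ∀ i ≤ k, (Y i).Nonempty)
    (hY : ∀ i < k, ∀ a ∈ Y i, ∀ b ∈ Y (i + 1), a < b) {i j : ℕ} (hij : i < j) (hj : j ≤ k) :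
    ∀ a ∈ Y i, ∀ b ∈ Y j, a < b := by
  induction j, hij using Nat.le_induction with
  | base => exact hY i hj
  | succ j hij ih =>
    intro a ha b hb
    obtain ⟨c, hc⟩ := hne j (by omega)
    exact (ih (by omega) a ha c hc).trans (hY j hj c hc b hb)

theorem hasBlockDecomposition_zero {P : ℕ → Finset ℕ → Prop} {X : Finset ℕ} :
    HasBlockDecomposition P 0 X ↔ P 0 X := by
  constructor
  · rintro ⟨Y, rfl, -, hP, -⟩
    simpa using hP 0 one_pos
  · intro h
    exact ⟨fun _ => X, by simp, by omega, by simpa using h, by omega⟩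

theorem hasBlockDecomposition_succ {P : ℕ → Finset ℕ → Prop} (hP : ∀ i Z, P i Z → Z.Nonempty)
    {k : ℕ} {X : Finset ℕ} :
    HasBlockDecomposition P (k + 1) X ↔
      ∃ A B, X = A ∪ B ∧ (∀ a ∈ A, ∀ b ∈ B, a < b) ∧ P 0 A ∧
        HasBlockDecomposition (fun i => P (i + 1)) k B := by
  constructor
  · rintro ⟨Y, rfl, hdisj, hPY, hlt⟩
    refine ⟨Y 0, _, Finset.biUnion_range_succ' Y _, ?_, hPY 0 (by omega),
      fun i => Y (i + 1), rfl, fun i hi j hj hij => hdisj _ (by omega) _ (by omega) (by omega),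
      fun i hi => hPY _ (by omega), fun i hi => hlt _ (by omega)⟩
    intro a ha b hb
    obtain ⟨j, hj, hb⟩ := Finset.mem_biUnion.mp hb
    exact lt_of_mem_of_mem_of_chain (fun i hi => hP i _ (hPY i (by omega))) hlt
      (Nat.succ_pos j) (by simpa using hj) a ha b hb
  · rintro ⟨A, _, rfl, hAB, hA, Y, rfl, hdisj, hPY, hlt⟩
    have hsub : ∀ i < k + 1, Y i ⊆ (Finset.range (k + 1)).biUnion Y := fun i hi =>
      Finset.subset_biUnion_of_mem Y (Finset.mem_range.mpr hi)
    have hA_disj : Disjoint A ((Finset.range (k + 1)).biUnion Y) :=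
      Finset.disjoint_left.mpr fun a ha ha' => (hAB a ha a ha').false
    refine ⟨fun | 0 => A | i + 1 => Y i, by rw [Finset.biUnion_range_succ' _ (k + 1)], ?_, ?_, ?_⟩
    · rintro (_ | i) hi (_ | j) hj hij
      · exact absurd rfl hij
      · exact hA_disj.mono_right (hsub j (by omega))
      · exact (hA_disj.mono_right (hsub i (by omega))).symm
      · exact hdisj i (by omega) j (by omega) (by omega)
    · rintro (_ | i) hi
      · exact hA
      · exact hPY i (by omega)
    · rintro (_ | i) hi a ha b hb
      · exact hAB a ha b (hsub 0 (by omega) hb)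
      · exact hlt i (by omega) a ha b hb

theorem alphaLarge_iff_decomposition_general (k : ℕ) (n : ℕ → ℕ)
    (X : Finset ℕ) :
    IsAlphaLarge ((List.range (k + 1)).map n) X ↔
      ∃ Y : ℕ → Finset ℕ,
        X = (Finset.range (k + 1)).biUnion Y ∧
        (∀ i < k + 1, ∀ j < k + 1, i ≠ j → Disjoint (Y i) (Y j)) ∧
        (∀ i < k + 1, IsAlphaLarge [n i] (Y i)) ∧
        (∀ i < k, ∀ a ∈ Y i, ∀ b ∈ Y (i + 1), a < b) := by
  show _ ↔ HasBlockDecomposition (fun i => IsAlphaLarge [n i]) k X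
  induction k generalizing n X with
  | zero => exact (hasBlockDecomposition_zero (P := fun i => IsAlphaLarge [n i])).symm
  | succ k ih =>
    have hα : (List.range (k + 2)).map n = [n 0] ++ (List.range (k + 1)).map fun i => n (i + 1) := by
      simp [List.range_succ_eq_map, Function.comp_def]
    rw [hα, isAlphaLarge_append_iff (List.cons_ne_nil _ _),
      hasBlockDecomposition_succ fun _ _ => IsAlphaLarge.nonempty]
    simp only [ih]

/-- **Decomposition of α-largeness for sums of ω-powers.** Let
`α = ω^{n_k} + ⋯ + ω^{n_0}` with `n_k ≥ ⋯ ≥ n_0`.  A finite set `X ⊆ ℕ` with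
`min X ≥ 1` is `α`-large iff there are sets `X_0, …, X_k` such that `X` is the
disjoint union `X_0 ⊔ ⋯ ⊔ X_k`, each `X_i` is `ω^{n_i}`-large, and
`max X_i < min X_{i+1}` for every `i < k`. -/
theorem alphaLarge_iff_decomposition (k : ℕ) (n : ℕ → ℕ)
    (hmono : ∀ i, i < k → n i ≤ n (i + 1))
    (X : Finset ℕ) (hmin : ∀ x ∈ X, 1 ≤ x) :
    IsAlphaLarge ((List.range (k + 1)).map n) X ↔
      ∃ Y : ℕ → Finset ℕ,
        X = (Finset.range (k + 1)).biUnion Y ∧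
        (∀ i < k + 1, ∀ j < k + 1, i ≠ j → Disjoint (Y i) (Y j)) ∧
        (∀ i < k + 1, IsAlphaLarge [n i] (Y i)) ∧
        (∀ i < k, ∀ a ∈ Y i, ∀ b ∈ Y (i + 1), a < b) :=
  alphaLarge_iff_decomposition_general k n X
end

section
/- (Splitting ω^n·2-large sets.) Let n ∈ ℕ and let X ⊆ ℕ be a finite ω^n·2-large set with min X ≥ 1. If X = X_0 ∪ X_1, then at least one of X_0, X_1 is ω^n-large. -/
open Multiset

namespace LargeSet

lemma largeStep_cons (a : ℕ) (l : List ℕ) (y : ℕ) :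
    largeStep (a :: l) y = largeStep [a] y ++ l := by
  cases a <;> simp [largeStep]

lemma pairwise_largeStep {l : List ℕ} (hl : l.Pairwise (· ≤ ·)) (y : ℕ) :
    (largeStep l y).Pairwise (· ≤ ·) := by
  match l, hl with
  | [], _ => exact List.Pairwise.nil
  | 0 :: _, hl => exact hl.of_cons
  | (e + 1) :: _, hl =>
    refine List.pairwise_append.2 ⟨List.pairwise_replicate.2 (Or.inr le_rfl), hl.of_cons, ?_⟩
    intro a ha b hb
    rw [List.eq_of_mem_replicate ha]
    exact (List.rel_of_pairwise_cons hl hb).trans' e.le_succ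

def step (α : Multiset ℕ) (y : ℕ) : Multiset ℕ := largeStep (α.sort (· ≤ ·)) y

def IsLarge (α : Multiset ℕ) (X : Finset ℕ) : Prop := (X.sort (· ≤ ·)).foldl step α = 0

lemma step_coe {l : List ℕ} (hl : l.Pairwise (· ≤ ·)) (y : ℕ) :
    step l y = (largeStep l y : Multiset ℕ) := by
  rw [step, coe_sort, List.mergeSort_eq_self (r := (· ≤ ·)) hl]

lemma foldl_step_coe {l : List ℕ} (hl : l.Pairwise (· ≤ ·)) (ys : List ℕ) :
    ys.foldl step l = ((ys.foldl largeStep l : List ℕ) : Multiset ℕ) := by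
  induction ys generalizing l with
  | nil => rfl
  | cons y ys ih =>
    rw [List.foldl_cons, List.foldl_cons, step_coe hl, ih (pairwise_largeStep hl y)]

lemma isAlphaLarge_iff_isLarge {l : List ℕ} (hl : l.Pairwise (· ≤ ·)) (X : Finset ℕ) :
    IsAlphaLarge l X ↔ IsLarge l X := by
  rw [IsAlphaLarge, IsLarge, foldl_step_coe hl, coe_eq_zero]

lemma step_zero (y : ℕ) : step 0 y = 0 := by
  simp [step, largeStep]

lemma step_cons {a : ℕ} {γ : Multiset ℕ} (h : ∀ b ∈ γ, a ≤ b) (y : ℕ) :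
    step (a ::ₘ γ) y = largeStep [a] y + γ := by
  rw [step, sort_cons _ _ _ h, largeStep_cons, ← coe_add, sort_eq]

lemma exists_eq_cons_min {α : Multiset ℕ} (hα : α ≠ 0) :
    ∃ a γ, α = a ::ₘ γ ∧ ∀ b ∈ γ, a ≤ b := by
  have hsort := sort_eq α (· ≤ ·)
  obtain ⟨a, l, hal⟩ := List.exists_cons_of_ne_nil (l := α.sort (· ≤ ·))
    fun h => hα (by rw [← hsort, h]; rfl)
  refine ⟨a, l, by rw [← hsort, hal]; rfl, fun b hb => ?_⟩
  have hp := pairwise_sort α (· ≤ ·)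
  rw [hal] at hp
  exact List.rel_of_pairwise_cons hp hb

inductive Move (t : ℕ) : Multiset ℕ → Multiset ℕ → Prop
  | erase (c : ℕ) (γ : Multiset ℕ) : Move t (c ::ₘ γ) γ
  | lower {s : ℕ} (e : ℕ) (γ : Multiset ℕ) (hs : s ≤ t) :
      Move t ((e + 1) ::ₘ γ) (replicate s e + γ)

abbrev Reduces (t : ℕ) : Multiset ℕ → Multiset ℕ → Prop := Relation.ReflTransGen (Move t)

lemma reduces_add_left (t : ℕ) (δ γ : Multiset ℕ) : Reduces t (δ + γ) γ := by
  induction δ using Multiset.induction_on with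
  | empty => rw [zero_add]
  | cons c δ ih => rw [cons_add]; exact .head (.erase c _) ih

lemma reduces_cons_lower {t : ℕ} (ht : 1 ≤ t) (b d : ℕ) (γ : Multiset ℕ) :
    Reduces t ((b + d) ::ₘ γ) (b ::ₘ γ) := by
  induction d with
  | zero => rfl
  | succ d ih =>
    rw [← add_assoc]
    exact .head (by simpa using Move.lower (b + d) γ ht) ih

lemma reduces_cons_largeStep (a y : ℕ) (γ : Multiset ℕ) :
    Reduces y (a ::ₘ γ) (largeStep [a] y + γ) := by
  cases a with
  | zero => exact .single (by simpa [largeStep] using Move.erase 0 γ)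
  | succ e => exact .single (by simpa [largeStep, coe_replicate] using Move.lower e γ le_rfl)

lemma reduces_step (α : Multiset ℕ) (y : ℕ) : Reduces y α (step α y) := by
  rcases eq_or_ne α 0 with rfl | hα
  · rw [step_zero]
  obtain ⟨a, γ, rfl, hmin⟩ := exists_eq_cons_min hα
  rw [step_cons hmin]
  exact reduces_cons_largeStep a y γ

lemma Move.step_mono {t y : ℕ} {α β : Multiset ℕ} (hm : Move t α β) (hty : t ≤ y) :
    Reduces y (step α y) (step β y) := by
  obtain ⟨m, γ, hα, hmin⟩ := exists_eq_cons_min (α := α) (by cases hm <;> simp)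
  rw [hα, step_cons hmin]
  cases hm with
  | erase c δ =>
    rcases cons_eq_cons.1 hα with ⟨rfl, rfl⟩ | ⟨-, ε, rfl, rfl⟩
    · exact (reduces_add_left y _ _).trans (reduces_step _ y)
    · rw [step_cons fun b hb => hmin b (mem_cons_of_mem hb), add_cons]
      exact .single (.erase c _)
  | @lower s e δ hs =>
    rcases cons_eq_cons.1 hα with ⟨rfl, rfl⟩ | ⟨hem, ε, rfl, rfl⟩
    · have hR : (largeStep [e + 1] y : Multiset ℕ) = replicate y e := by
        simp [largeStep, coe_replicate]
      rw [hR]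
      rcases s with _ | s
      · rw [replicate_zero, zero_add]
        exact (reduces_add_left y _ _).trans (reduces_step _ y)
      obtain ⟨k, rfl⟩ : ∃ k, y = k + (s + 1) := ⟨y - (s + 1), by omega⟩
      have hmin' : ∀ b ∈ replicate s e + δ, e ≤ b := by
        intro b hb
        rcases Multiset.mem_add.1 hb with hb | hb
        · exact (eq_of_mem_replicate hb).ge
        · exact (hmin b hb).trans' e.le_succ
      rw [replicate_succ, cons_add, step_cons hmin', replicate_add, replicate_succ, add_assoc,
        cons_add]
      exact (reduces_add_left _ _ _).trans (reduces_cons_largeStep e _ _)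
    · have hme : m ≤ e := by have := hmin (e + 1) (mem_cons_self _ _); omega
      have hmin' : ∀ b ∈ replicate s e + ε, m ≤ b := by
        intro b hb
        rcases Multiset.mem_add.1 hb with hb | hb
        · exact (eq_of_mem_replicate hb).ge.trans' hme
        · exact hmin b (mem_cons_of_mem hb)
      rw [add_cons m (replicate s e), step_cons hmin', add_cons, add_left_comm]
      exact .single (.lower e _ (hs.trans hty))

lemma Reduces.step_mono {t y : ℕ} {α β : Multiset ℕ} (h : Reduces t α β) (hty : t ≤ y) :
    Reduces y (step α y) (step β y) := by
  induction h with
  | refl => rfl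
  | tail _ hm ih => exact ih.trans (hm.step_mono hty)

lemma Reduces.eq_zero {t : ℕ} {β : Multiset ℕ} (h : Reduces t 0 β) : β = 0 := by
  induction h with
  | refl => rfl
  | tail _ hm ih =>
    subst ih
    generalize h0 : (0 : Multiset ℕ) = α at hm
    cases hm <;> exact absurd h0.symm cons_ne_zero

lemma isLarge_empty {α : Multiset ℕ} : IsLarge α ∅ ↔ α = 0 := by
  simp [IsLarge]

lemma isLarge_insert {α : Multiset ℕ} {x : ℕ} {X : Finset ℕ} (hx : ∀ z ∈ X, x < z) :
    IsLarge α (insert x X) ↔ IsLarge (step α x) X := by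
  rw [IsLarge, IsLarge, Finset.sort_insert _ (fun z hz => (hx z hz).le) fun h => (hx x h).false,
    List.foldl_cons]

lemma isLarge_zero (X : Finset ℕ) : IsLarge 0 X :=
  List.foldl_fixed' step_zero _

lemma IsLarge.of_reduces {t : ℕ} {α β : Multiset ℕ} {X : Finset ℕ} (h : IsLarge α X)
    (hαβ : Reduces t α β) (hX : ∀ z ∈ X, t ≤ z) : IsLarge β X := by
  induction X using Finset.induction_on_min generalizing t α β with
  | empty =>
    rw [isLarge_empty] at h ⊢
    exact (h ▸ hαβ).eq_zero
  | insert x X hx ih =>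
    rw [isLarge_insert hx] at h ⊢
    exact ih h (hαβ.step_mono (hX x (Finset.mem_insert_self _ _))) fun z hz => (hx z hz).le

lemma IsLarge.of_erase {α : Multiset ℕ} {x : ℕ} {X : Finset ℕ} (h : IsLarge α (X.erase x))
    (hx : ∀ z ∈ X.erase x, x < z) : IsLarge α X := by
  by_cases hxX : x ∈ X
  · rw [← Finset.insert_erase hxX, isLarge_insert hx]
    exact h.of_reduces (reduces_step α x) fun z hz => (hx z hz).le
  · rwa [Finset.erase_eq_of_notMem hxX] at h

lemma reduces_step_add {u : Multiset ℕ} (hu : u ≠ 0) (v : Multiset ℕ) (x : ℕ) :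
    Reduces (x + 1) (step (u + v) x) (step u x + v) := by
  obtain ⟨a, u', rfl, hu'⟩ := exists_eq_cons_min hu
  rcases eq_or_ne v 0 with rfl | hv
  · rw [add_zero, add_zero]
  obtain ⟨b, v', rfl, hv'⟩ := exists_eq_cons_min hv
  rw [step_cons hu']
  by_cases hab : a ≤ b
  · have hmin : ∀ z ∈ u' + b ::ₘ v', a ≤ z := by
      intro z hz
      rcases Multiset.mem_add.1 hz with hz | hz
      · exact hu' z hz
      · rcases mem_cons.1 hz with rfl | hz
        exacts [hab, hab.trans (hv' z hz)]
    rw [cons_add, step_cons hmin, add_assoc]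
  obtain ⟨c, rfl⟩ : ∃ c, a = c + 1 := ⟨a - 1, by omega⟩
  have hmin : ∀ z ∈ (c + 1) ::ₘ u' + v', b ≤ z := by
    intro z hz
    rcases Multiset.mem_add.1 hz with hz | hz
    · rcases mem_cons.1 hz with rfl | hz
      exacts [by omega, by have := hu' z hz; omega]
    · exact hv' z hz
  have hR : (largeStep [c + 1] x : Multiset ℕ) = replicate x c := by
    simp [largeStep, coe_replicate]
  have hdrop : Reduces (x + 1) (largeStep [b] x + ((c + 1) ::ₘ u' + v'))
      ((c + 1) ::ₘ (u' + v')) := by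
    rw [cons_add]
    exact reduces_add_left _ _ _
  have hsplit : Reduces (x + 1) ((c + 1) ::ₘ (u' + v')) (c ::ₘ (replicate x c + (u' + v'))) :=
    .single (by simpa [replicate_succ] using Move.lower (s := x + 1) c (u' + v') le_rfl)
  have hlower : Reduces (x + 1) (c ::ₘ (replicate x c + (u' + v')))
      (b ::ₘ (replicate x c + (u' + v'))) := by
    simpa [show b + (c - b) = c by omega] using reduces_cons_lower (by omega) b (c - b) _
  rw [add_cons, step_cons hmin, hR]
  convert hdrop.trans (hsplit.trans hlower) using 1
  simp only [add_cons, add_assoc]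

theorem IsLarge.split {u v : Multiset ℕ} {X X0 X1 : Finset ℕ} (h : IsLarge (u + v) X)
    (hX : X = X0 ∪ X1) : IsLarge u X0 ∨ IsLarge v X1 := by
  induction X using Finset.induction_on_min generalizing X0 X1 u v with
  | empty =>
    rw [isLarge_empty, add_eq_zero] at h
    exact .inl (h.1 ▸ isLarge_zero X0)
  | insert x X hx ih =>
    wlog hx0 : x ∈ X0 generalizing X0 X1 u v
    · have hx1 : x ∈ X1 := by
        have := hX ▸ Finset.mem_insert_self x X
        exact (Finset.mem_union.1 this).resolve_left hx0
      exact (this (add_comm u v ▸ h) (hX.trans (Finset.union_comm _ _)) hx1).symm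
    rcases eq_or_ne u 0 with rfl | hu
    · exact .inl (isLarge_zero X0)
    rw [isLarge_insert hx] at h
    have hX' : X = X0.erase x ∪ X1.erase x := by
      rw [← Finset.erase_union_distrib, ← hX, Finset.erase_insert fun h => (hx x h).false]
    have hgt : ∀ z ∈ X0.erase x ∪ X1.erase x, x < z := hX' ▸ hx
    refine (ih (h.of_reduces (reduces_step_add hu v x) fun z hz => hx z hz) hX').imp
      (fun h0 => ?_) (fun h1 => h1.of_erase fun z hz => hgt z (Finset.mem_union_right _ hz))
    rw [← Finset.insert_erase hx0, isLarge_insert fun z hz => hgt z (Finset.mem_union_left _ hz)]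
    exact h0

end LargeSet

theorem omegaPow_two_large_split_general (n : ℕ) (X X0 X1 : Finset ℕ)
    (hlarge : IsAlphaLarge [n, n] X) (hsplit : X = X0 ∪ X1) :
    IsAlphaLarge [n] X0 ∨ IsAlphaLarge [n] X1 := by
  simp only [LargeSet.isAlphaLarge_iff_isLarge (List.pairwise_singleton _ n),
    LargeSet.isAlphaLarge_iff_isLarge (by simp : [n, n].Pairwise (· ≤ ·))] at hlarge ⊢
  exact LargeSet.IsLarge.split (u := {n}) (v := {n}) hlarge hsplit

/-- **Splitting `ω^n · 2`-large sets.** Let `n ∈ ℕ` and let `X ⊆ ℕ` be a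
finite `ω^n · 2`-large set with `min X ≥ 1`.  If `X = X_0 ∪ X_1`, then at
least one of `X_0, X_1` is `ω^n`-large.  (The ordinal `ω^n · 2 = ω^n + ω^n`
is represented by the exponent list `[n, n]`.) -/
theorem omegaPow_two_large_split (n : ℕ) (X X0 X1 : Finset ℕ)
    (hmin : ∀ x ∈ X, 1 ≤ x)
    (hlarge : IsAlphaLarge [n, n] X) (hsplit : X = X0 ∪ X1) :
    IsAlphaLarge [n] X0 ∨ IsAlphaLarge [n] X1 :=
  omegaPow_two_large_split_general n X X0 X1 hlarge hsplit
end

section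
/- (ω²-large intervals grow at least exponentially.) For all natural numbers x ≥ 1 and y, if the interval (x, y] = {x+1, x+2, …, y} is ω²-large, then y > x·2^x (and in particular y ≥ x²). -/
/-!
Reading `(x, y]` from the left, its least element `x + 1` turns `ω²` into `ω·(x + 1)`.
Each copy of `ω` then consumes an initial segment `[a, 2a]` of the remaining interval
`[a, y]`, so it doubles `a + 1`; after `x + 1` copies this forces
`y + 2 ≥ 2^(x+1)·(x + 3)`.
-/

lemma length_le_length_largeStep_add_one (γ : List ℕ) (m : ℕ) :
    γ.length ≤ (largeStep γ m).length + 1 := by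
  match γ with
  | [] => simp [largeStep]
  | 0 :: β => simp [largeStep]
  | (n + 1) :: β => simp [largeStep]

lemma length_le_of_foldl_largeStep_eq_nil {γ : List ℕ} {l : List ℕ}
    (h : l.foldl largeStep γ = []) : γ.length ≤ l.length := by
  induction l generalizing γ with
  | nil => simp_all
  | cons m l ih =>
    have hrest := ih h
    have hstep := length_le_length_largeStep_add_one γ m
    simp only [List.length_cons]
    omega

lemma foldl_largeStep_replicate_zero_append (β : List ℕ) {l₁ : List ℕ} (l₂ : List ℕ) :
    (l₁ ++ l₂).foldl largeStep (List.replicate l₁.length 0 ++ β) = l₂.foldl largeStep β := by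
  induction l₁ with
  | nil => rfl
  | cons m l₁ ih => exact ih

lemma two_pow_mul_le_of_foldl_replicate_one_range' {j a n : ℕ}
    (h : (List.range' a n).foldl largeStep (List.replicate j 1) = []) :
    2 ^ j * (a + 1) ≤ a + n + 1 := by
  induction j generalizing a n with
  | zero => simp
  | succ j ih =>
    obtain _ | n := n
    · simp [List.replicate_succ] at h
    have hstep : largeStep (List.replicate (j + 1) 1) a
        = List.replicate a 0 ++ List.replicate j 1 := rfl
    rw [List.range'_succ, List.foldl_cons, hstep] at h
    obtain ⟨m, rfl⟩ : ∃ m, n = a + m := by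
      have hlen := length_le_of_foldl_largeStep_eq_nil h
      simp only [List.length_append, List.length_replicate, List.length_range'] at hlen
      exact ⟨n - a, by omega⟩
    rw [← List.range'_append] at h
    have hskip := foldl_largeStep_replicate_zero_append (List.replicate j 1)
      (l₁ := List.range' (a + 1) a) (List.range' (a + 1 + 1 * a) m)
    rw [List.length_range'] at hskip
    rw [hskip] at h
    have hrest := ih h
    rw [pow_succ]
    linarith

lemma sort_Ioc (a b : ℕ) : (Finset.Ioc a b).sort (· ≤ ·) = List.range' (a + 1) (b - a) :=
  List.mergeSort_eq_self _ (List.pairwise_le_range' 1)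

theorem omegaSq_large_interval_exponential_general (x y : ℕ)
    (h : IsAlphaLarge [2] (Finset.Ioc x y)) :
    x * 2 ^ x < y ∧ x ^ 2 ≤ y := by
  rw [IsAlphaLarge, sort_Ioc] at h
  obtain ⟨n, rfl⟩ : ∃ n, y = x + (n + 1) := by
    have hlen := length_le_of_foldl_largeStep_eq_nil h
    simp only [List.length_singleton, List.length_range'] at hlen
    exact ⟨y - x - 1, by omega⟩
  rw [Nat.add_sub_cancel_left, List.range'_succ, List.foldl_cons,
    show largeStep [2] (x + 1) = List.replicate (x + 1) 1 by simp [largeStep]] at h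
  have hbound := two_pow_mul_le_of_foldl_replicate_one_range' h
  have hexp : x * 2 ^ x < x + (n + 1) := by
    rw [pow_succ] at hbound
    nlinarith [Nat.one_le_two_pow (n := x)]
  have hsq : x ^ 2 ≤ x * 2 ^ x := by
    rw [sq]
    exact Nat.mul_le_mul_left x Nat.lt_two_pow_self.le
  exact ⟨hexp, hsq.trans hexp.le⟩

/-- **ω²-large intervals grow at least exponentially.** For all `x ≥ 1` and
`y`, if the interval `(x, y] = {x+1, …, y}` is `ω²`-large, then `y > x·2^x`
(and in particular `y ≥ x²`). -/
theorem omegaSq_large_interval_exponential (x y : ℕ) (hx : 1 ≤ x)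
    (h : IsAlphaLarge [2] (Finset.Ioc x y)) :
    x * 2 ^ x < y ∧ x ^ 2 ≤ y :=
  omegaSq_large_interval_exponential_general x y h
end
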